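/- Let A be a commutative bounded algebra over 𝕂 and Q a bounded A-module. Let F be a bounded A-module which is free with a finite basis b_1, …, b_n whose dual basis b_1^*, …, b_n^* consists of bounded A-linear functionals F → A, and let P be a bounded A-module for which there exist bounded A-linear mappings ι : P → F and π : F → P with π ∘ ι = id_P. Then the canonical 𝕂-linear mapping θ_P : L^b_A(P, A) ⊗_A^β Q → L^b_A(P, Q), induced by (u^*, q) ↦ [p ↦ u^*(p) · q], is a bornological isomorphism. -/

import Mathlib

/-!
A bounded retract `P` of a finite free module with bounded dual basis has a finite bounded dual
basis of its own: `eᵢ = π bᵢ` and `φᵢ = bᵢ* ∘ ι`, with `p = ∑ φᵢ(p) • eᵢ`. Choosing `dᵢ` with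
`eD dᵢ = φᵢ`, the map `σ ℓ = ∑ dᵢ ⊗ ℓ(eᵢ)` satisfies `θ ∘ σ = id`, and `x - σ (θ x)` is a sum of
balancing relations `(a • d) ⊗ w - d ⊗ (a • w)`, so `σ` inverts `θ` on the quotient. Evaluating
`θ` at a point of `P` is bounded on elementary tensors, hence continuous on the β-tensor product;
so `θ` kills the closure of the relations, and it maps bounded sets to equibounded ones. Both
`θ` and `σ` are bounded because each is a finite sum of bounded bilinear expressions in the data.
-/

open MulOpposite Set
open scoped TensorProduct Pointwise

/-- Convexity expressed through the real scalars of `𝕜` (`𝕜` = ℝ or ℂ). -/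
def RCConvex (𝕜 : Type*) [RCLike 𝕜] {E : Type*} [AddCommGroup E] [Module 𝕜 E]
    (s : Set E) : Prop :=
  ∀ ⦃x⦄, x ∈ s → ∀ ⦃y⦄, y ∈ s → ∀ t : ℝ, 0 ≤ t → t ≤ 1 →
    ((t : 𝕜) • x + (((1 - t : ℝ) : 𝕜)) • y) ∈ s

/-- `τ` is a linear topology: addition and scalar multiplication continuous. -/
def IsLinearTop (𝕜 : Type*) [RCLike 𝕜] (E : Type*) [AddCommGroup E] [Module 𝕜 E]
    (τ : TopologicalSpace E) : Prop :=
  @IsTopologicalAddGroup E τ _ ∧ @ContinuousSMul 𝕜 E _ _ τ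

/-- `τ` is a locally convex topology. -/
def IsLCTop (𝕜 : Type*) [RCLike 𝕜] (E : Type*) [AddCommGroup E] [Module 𝕜 E]
    (τ : TopologicalSpace E) : Prop :=
  IsLinearTop 𝕜 E τ ∧ ∀ U ∈ @nhds E τ 0, ∃ V ∈ @nhds E τ 0, V ⊆ U ∧ RCConvex 𝕜 V

/-- von Neumann boundedness for an explicitly given topology. -/
def VNBdd (𝕜 : Type*) [RCLike 𝕜] {E : Type*} [AddCommGroup E] [Module 𝕜 E]
    (τ : TopologicalSpace E) (s : Set E) : Prop :=
  ∀ V ∈ @nhds E τ 0, Absorbs 𝕜 V s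

/-- `f` maps von Neumann bounded sets to von Neumann bounded sets. -/
def BddMap (𝕜 : Type*) [RCLike 𝕜] {E F : Type*} [AddCommGroup E] [Module 𝕜 E]
    [AddCommGroup F] [Module 𝕜 F]
    (τE : TopologicalSpace E) (τF : TopologicalSpace F) (f : E → F) : Prop :=
  ∀ s : Set E, VNBdd 𝕜 τE s → VNBdd 𝕜 τF (f '' s)

/-- A family `S` of maps is (equi-)bounded: this is exactly von Neumann boundedness
of `S` in the topology of uniform convergence on bounded sets. -/
def FamBdd (𝕜 : Type*) [RCLike 𝕜] {E F : Type*} [AddCommGroup E] [Module 𝕜 E]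
    [AddCommGroup F] [Module 𝕜 F]
    (τE : TopologicalSpace E) (τF : TopologicalSpace F) (S : Set (E → F)) : Prop :=
  ∀ s : Set E, VNBdd 𝕜 τE s → VNBdd 𝕜 τF (⋃ f ∈ S, f '' s)

/-- `𝕜`-bilinearity of a map on a product. -/
def IsBilinMap (𝕜 : Type*) [RCLike 𝕜] {M N E : Type*} [AddCommGroup M] [Module 𝕜 M]
    [AddCommGroup N] [Module 𝕜 N] [AddCommGroup E] [Module 𝕜 E]
    (f : M × N → E) : Prop :=
  (∀ m m' n, f (m + m', n) = f (m, n) + f (m', n)) ∧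
  (∀ (c : 𝕜) m n, f (c • m, n) = c • f (m, n)) ∧
  (∀ m n n', f (m, n + n') = f (m, n) + f (m, n')) ∧
  (∀ (c : 𝕜) m n, f (m, c • n) = c • f (m, n))

/-- `f` is `A`-balanced: `f (m·a, n) = f (m, a·n)`; the right `A`-module structure
on `M` is given by a `Aᵐᵒᵖ`-module structure. -/
def IsBalancedMap (A : Type*) [Ring A] {M N E : Type*} [AddCommGroup M]
    [Module Aᵐᵒᵖ M] [AddCommGroup N] [Module A N] (f : M × N → E) : Prop :=
  ∀ (a : A) (m : M) (n : N), f (op a • m, n) = f (m, a • n)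

/-- `τ` is the projective tensor product topology on `M ⊗[𝕜] N`: the finest locally
convex topology making the canonical bilinear map continuous. -/
def IsProjTensorTop (𝕜 : Type*) [RCLike 𝕜] {M N : Type*} [AddCommGroup M] [Module 𝕜 M]
    [AddCommGroup N] [Module 𝕜 N] (τM : TopologicalSpace M) (τN : TopologicalSpace N)
    (τ : TopologicalSpace (TensorProduct 𝕜 M N)) : Prop :=
  IsLCTop 𝕜 (TensorProduct 𝕜 M N) τ ∧
  @Continuous (M × N) (TensorProduct 𝕜 M N) (@instTopologicalSpaceProd M N τM τN) τ
    (fun p => p.1 ⊗ₜ[𝕜] p.2) ∧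
  ∀ τ' : TopologicalSpace (TensorProduct 𝕜 M N), IsLCTop 𝕜 (TensorProduct 𝕜 M N) τ' →
    @Continuous (M × N) (TensorProduct 𝕜 M N) (@instTopologicalSpaceProd M N τM τN) τ'
      (fun p => p.1 ⊗ₜ[𝕜] p.2) → τ ≤ τ'

/-- `τ` is the bornological tensor product topology on `M ⊗[𝕜] N`: the finest locally
convex topology making the canonical bilinear map bounded. -/
def IsBetaTensorTop (𝕜 : Type*) [RCLike 𝕜] {M N : Type*} [AddCommGroup M] [Module 𝕜 M]
    [AddCommGroup N] [Module 𝕜 N] (τM : TopologicalSpace M) (τN : TopologicalSpace N)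
    (τ : TopologicalSpace (TensorProduct 𝕜 M N)) : Prop :=
  IsLCTop 𝕜 (TensorProduct 𝕜 M N) τ ∧
  BddMap 𝕜 (@instTopologicalSpaceProd M N τM τN) τ (fun p : M × N => p.1 ⊗ₜ[𝕜] p.2) ∧
  ∀ τ' : TopologicalSpace (TensorProduct 𝕜 M N), IsLCTop 𝕜 (TensorProduct 𝕜 M N) τ' →
    BddMap 𝕜 (@instTopologicalSpaceProd M N τM τN) τ' (fun p : M × N => p.1 ⊗ₜ[𝕜] p.2) →
      τ ≤ τ'

/-- The subspace `J₀` of `M ⊗[𝕜] N` spanned by the elements `m·a ⊗ n - m ⊗ a·n`. -/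
def balancedRel (𝕜 A : Type*) [RCLike 𝕜] [Ring A] [Algebra 𝕜 A] (M N : Type*)
    [AddCommGroup M] [Module 𝕜 M] [Module Aᵐᵒᵖ M]
    [AddCommGroup N] [Module 𝕜 N] [Module A N] :
    Submodule 𝕜 (TensorProduct 𝕜 M N) :=
  Submodule.span 𝕜
    {x | ∃ (a : A) (m : M) (n : N), x = (op a • m) ⊗ₜ[𝕜] n - m ⊗ₜ[𝕜] (a • n)}

/-- The subspace `J₀` for modules over a commutative algebra `A`. -/
def balancedRelComm (𝕜 A : Type*) [RCLike 𝕜] [CommRing A] [Algebra 𝕜 A] (M N : Type*)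
    [AddCommGroup M] [Module 𝕜 M] [Module A M]
    [AddCommGroup N] [Module 𝕜 N] [Module A N] :
    Submodule 𝕜 (TensorProduct 𝕜 M N) :=
  Submodule.span 𝕜
    {x | ∃ (a : A) (m : M) (n : N), x = (a • m) ⊗ₜ[𝕜] n - m ⊗ₜ[𝕜] (a • n)}

section Bornology

variable {𝕜 : Type*} [RCLike 𝕜] {E F : Type*} [AddCommGroup E] [Module 𝕜 E]
  [AddCommGroup F] [Module 𝕜 F]

theorem VNBdd.subset {τ : TopologicalSpace E} {s t : Set E} (hs : VNBdd 𝕜 τ s) (hts : t ⊆ s) :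
    VNBdd 𝕜 τ t :=
  fun V hV => (hs V hV).mono_right hts

theorem BddMap.comp {G : Type*} [AddCommGroup G] [Module 𝕜 G] {τE : TopologicalSpace E}
    {τF : TopologicalSpace F} {τG : TopologicalSpace G} {g : F → G} {f : E → F}
    (hg : BddMap 𝕜 τF τG g) (hf : BddMap 𝕜 τE τF f) : BddMap 𝕜 τE τG (g ∘ f) := fun s hs => by
  rw [Set.image_comp]
  exact hg _ (hf s hs)

theorem vnbdd_singleton {τ : TopologicalSpace E} (hτ : IsLinearTop 𝕜 E τ) (x : E) :
    VNBdd 𝕜 τ {x} := by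
  let _ := τ; have := hτ.2
  exact Bornology.isVonNBounded_singleton x

theorem VNBdd.add {τ : TopologicalSpace E} (hτ : IsLinearTop 𝕜 E τ) {s t : Set E}
    (hs : VNBdd 𝕜 τ s) (ht : VNBdd 𝕜 τ t) : VNBdd 𝕜 τ (s + t) := by
  let _ := τ; have := hτ.1
  exact Bornology.IsVonNBounded.add hs ht

theorem vnbdd_finsetSum {τ : TopologicalSpace E} (hτ : IsLinearTop 𝕜 E τ) {ι : Type*}
    (s : Finset ι) {T : ι → Set E} (hT : ∀ i ∈ s, VNBdd 𝕜 τ (T i)) :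
    VNBdd 𝕜 τ (∑ i ∈ s, T i) := by
  classical
  induction s using Finset.induction_on with
  | empty =>
    rw [Finset.sum_empty, ← Set.singleton_zero]
    exact vnbdd_singleton hτ 0
  | insert i s hi ih =>
    rw [Finset.sum_insert hi]
    exact (hT i (s.mem_insert_self i)).add hτ (ih fun j hj => hT j (s.mem_insert_of_mem hj))

theorem VNBdd.prod {τE : TopologicalSpace E} {τF : TopologicalSpace F} {s : Set E} {t : Set F}
    (hs : VNBdd 𝕜 τE s) (ht : VNBdd 𝕜 τF t) :
    VNBdd 𝕜 (@instTopologicalSpaceProd E F τE τF) (s ×ˢ t) := by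
  intro V hV
  let _ := τE; let _ := τF
  obtain ⟨u, hu, v, hv, huv⟩ := mem_nhds_prod_iff.mp hV
  filter_upwards [hs u hu, ht v hv] with c hcs hct
  rintro ⟨x, y⟩ ⟨hx, hy⟩
  obtain ⟨x', hx', rfl⟩ := Set.mem_smul_set.mp (hcs hx)
  obtain ⟨y', hy', rfl⟩ := Set.mem_smul_set.mp (hct hy)
  exact Set.mem_smul_set.mpr ⟨(x', y'), huv ⟨hx', hy'⟩, rfl⟩

theorem VNBdd.image_of_continuous {τE : TopologicalSpace E} {τF : TopologicalSpace F}
    {s : Set E} (hs : VNBdd 𝕜 τE s) (f : E →ₗ[𝕜] F) (hf : @Continuous E F τE τF f) :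
    VNBdd 𝕜 τF (f '' s) := by
  let _ := τE; let _ := τF
  exact Bornology.IsVonNBounded.image (σ := RingHom.id 𝕜) hs ⟨f, hf⟩

theorem VNBdd.inf {τ₁ τ₂ : TopologicalSpace E} {s : Set E} (h₁ : VNBdd 𝕜 τ₁ s)
    (h₂ : VNBdd 𝕜 τ₂ s) : VNBdd 𝕜 (τ₁ ⊓ τ₂) s := by
  intro V hV
  rw [nhds_inf (t₁ := τ₁) (t₂ := τ₂)] at hV
  obtain ⟨V₁, hV₁, V₂, hV₂, rfl⟩ := Filter.mem_inf_iff.mp hV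
  exact (h₁ V₁ hV₁).inter (h₂ V₂ hV₂)

theorem VNBdd.induced {τ : TopologicalSpace F} {s : Set E} (f : E →ₗ[𝕜] F)
    (hs : VNBdd 𝕜 τ (f '' s)) : VNBdd 𝕜 (τ.induced f) s := by
  intro V hV
  rw [nhds_induced, map_zero] at hV
  obtain ⟨U, hU, hUV⟩ := Filter.mem_comap.mp hV
  filter_upwards [hs U hU, Bornology.eventually_ne_cobounded (0 : 𝕜)] with c hc hc0 x hx
  rw [Set.mem_smul_set_iff_inv_smul_mem₀ hc0]
  refine hUV ?_
  rw [Set.mem_preimage, map_smul]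
  exact (Set.mem_smul_set_iff_inv_smul_mem₀ hc0 _ _).mp (hc ⟨x, hx, rfl⟩)

theorem RCConvex.inter {s t : Set E} (hs : RCConvex 𝕜 s) (ht : RCConvex 𝕜 t) :
    RCConvex 𝕜 (s ∩ t) :=
  fun _ hx _ hy r hr0 hr1 => ⟨hs hx.1 hy.1 r hr0 hr1, ht hx.2 hy.2 r hr0 hr1⟩

theorem RCConvex.preimage {t : Set F} (ht : RCConvex 𝕜 t) (f : E →ₗ[𝕜] F) :
    RCConvex 𝕜 (f ⁻¹' t) := by
  intro x hx y hy r hr0 hr1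
  simpa only [Set.mem_preimage, map_add, map_smul] using ht hx hy r hr0 hr1

theorem IsLCTop.inf {τ₁ τ₂ : TopologicalSpace E} (h₁ : IsLCTop 𝕜 E τ₁) (h₂ : IsLCTop 𝕜 E τ₂) :
    IsLCTop 𝕜 E (τ₁ ⊓ τ₂) := by
  refine ⟨⟨topologicalAddGroup_inf h₁.1.1 h₂.1.1, @continuousSMul_inf _ _ _ _ _ _ h₁.1.2 h₂.1.2⟩,
    fun U hU => ?_⟩
  rw [nhds_inf (t₁ := τ₁) (t₂ := τ₂)] at hU
  obtain ⟨U₁, hU₁, U₂, hU₂, rfl⟩ := Filter.mem_inf_iff.mp hU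
  obtain ⟨V₁, hV₁, hVU₁, hV₁c⟩ := h₁.2 U₁ hU₁
  obtain ⟨V₂, hV₂, hVU₂, hV₂c⟩ := h₂.2 U₂ hU₂
  refine ⟨V₁ ∩ V₂, ?_, Set.inter_subset_inter hVU₁ hVU₂, hV₁c.inter hV₂c⟩
  rw [nhds_inf (t₁ := τ₁) (t₂ := τ₂)]
  exact Filter.inter_mem_inf hV₁ hV₂

theorem IsLCTop.induced {τ : TopologicalSpace F} (h : IsLCTop 𝕜 F τ) (f : E →ₗ[𝕜] F) :
    IsLCTop 𝕜 E (τ.induced f) := by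
  let _ := τ; have := h.1.1; have := h.1.2
  refine ⟨⟨topologicalAddGroup_induced f, continuousSMul_induced f⟩, fun U hU => ?_⟩
  rw [nhds_induced, map_zero] at hU ⊢
  obtain ⟨U', hU', hU'U⟩ := Filter.mem_comap.mp hU
  obtain ⟨V, hV, hVU', hVc⟩ := h.2 U' hU'
  exact ⟨f ⁻¹' V, Filter.preimage_mem_comap hV, (Set.preimage_mono hVU').trans hU'U,
    hVc.preimage f⟩

end Bornology

theorem IsBetaTensorTop.continuous_of_bddMap {𝕜 : Type*} [RCLike 𝕜] {M N G : Type*}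
    [AddCommGroup M] [Module 𝕜 M] [AddCommGroup N] [Module 𝕜 N] [AddCommGroup G] [Module 𝕜 G]
    {τM : TopologicalSpace M} {τN : TopologicalSpace N} {τT : TopologicalSpace (M ⊗[𝕜] N)}
    (hτT : IsBetaTensorTop 𝕜 τM τN τT) {τG : TopologicalSpace G} (hG : IsLCTop 𝕜 G τG)
    (L : M ⊗[𝕜] N →ₗ[𝕜] G)
    (hL : BddMap 𝕜 (@instTopologicalSpaceProd M N τM τN) τG (fun p => L (p.1 ⊗ₜ[𝕜] p.2))) :
    @Continuous _ _ τT τG L := by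
  have hbdd : BddMap 𝕜 (@instTopologicalSpaceProd M N τM τN) (τT ⊓ τG.induced L)
      (fun p => p.1 ⊗ₜ[𝕜] p.2) := fun s hs =>
    (hτT.2.1 s hs).inf (VNBdd.induced L (by rw [Set.image_image]; exact hL s hs))
  exact continuous_iff_le_induced.mpr
    ((hτT.2.2 _ (hτT.1.inf (hG.induced L)) hbdd).trans inf_le_right)

section DualTensorHom

variable {𝕜 : Type*} [RCLike 𝕜] {A : Type*} [CommRing A] [Algebra 𝕜 A]
  {D W P : Type*} [AddCommGroup D] [Module 𝕜 D] [Module A D] [IsScalarTower 𝕜 A D]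
  [AddCommGroup W] [Module 𝕜 W] [Module A W] [IsScalarTower 𝕜 A W]
  [AddCommGroup P] [Module A P]

variable (𝕜 W) in
def dualTensorHomOf (eD : D →ₗ[A] P →ₗ[A] A) : D ⊗[𝕜] W →ₗ[𝕜] P →ₗ[A] W :=
  TensorProduct.lift ((LinearMap.smulRightₗ ∘ₗ eD).restrictScalars₁₂ 𝕜 𝕜)

variable (eD : D →ₗ[A] P →ₗ[A] A)

@[simp]
theorem dualTensorHomOf_tmul (d : D) (w : W) (p : P) :
    dualTensorHomOf 𝕜 W eD (d ⊗ₜ w) p = eD d p • w :=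
  rfl

theorem balancedRelComm_le_ker_dualTensorHomOf :
    balancedRelComm 𝕜 A D W ≤ LinearMap.ker (dualTensorHomOf 𝕜 W eD) := by
  rw [balancedRelComm, Submodule.span_le]
  rintro _ ⟨a, d, w, rfl⟩
  ext p
  simp [mul_smul, smul_comm a]

end DualTensorHom

theorem LinearMap.apply_eq_sum_smul_apply {A P M ι : Type*} [Semiring A] [AddCommMonoid P]
    [Module A P] [AddCommMonoid M] [Module A M] [Fintype ι] {φ : ι → P →ₗ[A] A} {e : ι → P}
    (hφe : ∀ p, ∑ i, φ i p • e i = p) (ℓ : P →ₗ[A] M) (p : P) :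
    ℓ p = ∑ i, φ i p • ℓ (e i) := by
  conv_lhs => rw [← hφe p]
  simp only [map_sum, map_smul]

section DualBasis

variable {𝕜 : Type*} [RCLike 𝕜] {A : Type*} [CommRing A] [Algebra 𝕜 A]
  {D W P : Type*} [AddCommGroup D] [Module 𝕜 D] [AddCommGroup W] [Module 𝕜 W] [Module A W]
  [IsScalarTower 𝕜 A W] [AddCommGroup P] [Module A P] {ι : Type*} [Fintype ι]

variable (𝕜 W) in
def dualBasisSection (d : ι → D) (e : ι → P) : (P →ₗ[A] W) →ₗ[𝕜] D ⊗[𝕜] W :=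
  ∑ i, TensorProduct.mk 𝕜 D W (d i) ∘ₗ (LinearMap.applyₗ (e i)).restrictScalars 𝕜

theorem dualBasisSection_apply (d : ι → D) (e : ι → P) (ℓ : P →ₗ[A] W) :
    dualBasisSection 𝕜 W d e ℓ = ∑ i, d i ⊗ₜ ℓ (e i) := by
  simp [dualBasisSection]

variable [Module A D] [IsScalarTower 𝕜 A D] {eD : D →ₗ[A] P →ₗ[A] A} {d : ι → D} {e : ι → P}

theorem dualTensorHomOf_dualBasisSection (hde : ∀ p, ∑ i, eD (d i) p • e i = p)
    (ℓ : P →ₗ[A] W) : dualTensorHomOf 𝕜 W eD (dualBasisSection 𝕜 W d e ℓ) = ℓ := by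
  ext p
  simp [dualBasisSection_apply, ← LinearMap.apply_eq_sum_smul_apply hde]

theorem sum_smul_dualBasis (heD : Function.Injective eD) (hde : ∀ p, ∑ i, eD (d i) p • e i = p)
    (x : D) : ∑ i, eD x (e i) • d i = x := by
  refine heD (LinearMap.ext fun p => ?_)
  rw [LinearMap.apply_eq_sum_smul_apply hde (eD x) p]
  simp [mul_comm]

theorem sub_dualBasisSection_mem_balancedRelComm (heD : Function.Injective eD)
    (hde : ∀ p, ∑ i, eD (d i) p • e i = p) (x : D ⊗[𝕜] W) :
    x - dualBasisSection 𝕜 W d e (dualTensorHomOf 𝕜 W eD x) ∈ balancedRelComm 𝕜 A D W := by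
  induction x using TensorProduct.induction_on with
  | zero => simp
  | tmul x w =>
    have hsplit : x ⊗ₜ w - dualBasisSection 𝕜 W d e (dualTensorHomOf 𝕜 W eD (x ⊗ₜ w)) =
        ∑ i, ((eD x (e i) • d i) ⊗ₜ w - d i ⊗ₜ (eD x (e i) • w)) := by
      rw [Finset.sum_sub_distrib, ← TensorProduct.sum_tmul, sum_smul_dualBasis heD hde,
        dualBasisSection_apply]
      rfl
    rw [hsplit]
    exact Submodule.sum_mem _ fun i _ => Submodule.subset_span ⟨eD x (e i), d i, w, rfl⟩
  | add x y hx hy =>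
    convert add_mem hx hy using 1
    simp only [map_add]
    abel

end DualBasis

theorem Module.Basis.sum_coord_smul_of_retract {A F P ι : Type*} [CommRing A] [AddCommGroup F]
    [Module A F] [AddCommGroup P] [Module A P] [Fintype ι] (b : Module.Basis ι A F)
    {j : P →ₗ[A] F} {r : F →ₗ[A] P} (hrj : ∀ p, r (j p) = p) (p : P) :
    ∑ i, b.coord i (j p) • r (b i) = p := by
  simp only [← map_smul, ← map_sum, Module.Basis.coord_apply, b.sum_repr, hrj]

section Bounded

variable {𝕜 : Type*} [RCLike 𝕜] {A : Type*} [CommRing A] [Algebra 𝕜 A] [TopologicalSpace A]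
  {W P : Type*} [AddCommGroup W] [Module 𝕜 W] [Module A W] [TopologicalSpace W]
  [AddCommGroup P] [Module 𝕜 P] [Module A P] [TopologicalSpace P] {ι : Type*} [Fintype ι]
  {φ : ι → P →ₗ[A] A} {e : ι → P}

theorem vnbdd_biUnion_image_of_dualBasis (hW : IsLinearTop 𝕜 W ‹_›)
    (hWmod : BddMap 𝕜 (inferInstance : TopologicalSpace (A × W)) ‹_› (fun p : A × W => p.1 • p.2))
    (hφ : ∀ i, BddMap 𝕜 ‹_› ‹_› (φ i : P → A)) (hφe : ∀ p, ∑ i, φ i p • e i = p)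
    {X : Type*} (f : X → P →ₗ[A] W) {S : Set X}
    (hS : ∀ i, VNBdd 𝕜 ‹_› ((fun x => f x (e i)) '' S)) {B : Set P} (hB : VNBdd 𝕜 ‹_› B) :
    VNBdd 𝕜 ‹_› (⋃ x ∈ S, f x '' B) := by
  refine (vnbdd_finsetSum hW Finset.univ fun i _ =>
    hWmod _ ((hφ i B hB).prod (hS i))).subset ?_
  simp only [Set.iUnion_subset_iff]
  rintro x hx _ ⟨p, hp, rfl⟩
  rw [LinearMap.apply_eq_sum_smul_apply hφe]
  exact Set.finsetSum_mem_finsetSum _ _ _ fun i _ =>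
    ⟨(φ i p, f x (e i)), ⟨⟨p, hp, rfl⟩, ⟨x, hx, rfl⟩⟩, rfl⟩

theorem LinearMap.bddMap_of_dualBasis (hW : IsLinearTop 𝕜 W ‹_›)
    (hWmod : BddMap 𝕜 (inferInstance : TopologicalSpace (A × W)) ‹_› (fun p : A × W => p.1 • p.2))
    (hφ : ∀ i, BddMap 𝕜 ‹_› ‹_› (φ i : P → A)) (hφe : ∀ p, ∑ i, φ i p • e i = p) (ℓ : P →ₗ[A] W) :
    BddMap 𝕜 ‹_› ‹_› (ℓ : P → W) := fun B hB => by
  simpa using vnbdd_biUnion_image_of_dualBasis hW hWmod hφ hφe (fun ℓ : P →ₗ[A] W => ℓ)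
    (S := {ℓ}) (fun i => by simpa using vnbdd_singleton hW (ℓ (e i))) hB

theorem Module.Basis.exists_bdd_dualBasis_of_retract {F D : Type*} [AddCommGroup F]
    [Module 𝕜 F] [Module A F] [TopologicalSpace F] (b : Module.Basis ι A F)
    (hb : ∀ i, BddMap 𝕜 ‹_› ‹_› (fun x => b.coord i x)) {j : P →ₗ[A] F} {r : F →ₗ[A] P}
    (hrj : ∀ p, r (j p) = p) (hj : BddMap 𝕜 ‹_› ‹_› j) [AddCommGroup D] [Module A D]
    {eD : D →ₗ[A] P →ₗ[A] A} (heD : ∀ u : P →ₗ[A] A, BddMap 𝕜 ‹_› ‹_› u → ∃ d, eD d = u) :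
    ∃ d : ι → D, (∀ i, BddMap 𝕜 ‹_› ‹_› (eD (d i) : P → A)) ∧
      ∀ p, ∑ i, eD (d i) p • r (b i) = p := by
  choose d hd using fun i => heD (b.coord i ∘ₗ j) ((hb i).comp hj)
  refine ⟨d, fun i => hd i ▸ (hb i).comp hj, fun p => ?_⟩
  simpa [hd] using b.sum_coord_smul_of_retract hrj p

end Bounded

section BetaTensor

variable {𝕜 : Type*} [RCLike 𝕜] {A : Type*} [CommRing A] [Algebra 𝕜 A]
  {D W P : Type*} [AddCommGroup D] [Module 𝕜 D]
  [AddCommGroup W] [Module 𝕜 W] [Module A W] [IsScalarTower 𝕜 A W] [TopologicalSpace W]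
  [AddCommGroup P] [Module A P]
  {tD : TopologicalSpace D} {τT : TopologicalSpace (D ⊗[𝕜] W)}

theorem vnbdd_image_dualBasisSection (hτT : IsBetaTensorTop 𝕜 tD ‹_› τT) {ι : Type*}
    [Fintype ι] {d : ι → D} (hd : ∀ i, VNBdd 𝕜 tD {d i}) (e : ι → P)
    {T : Set (P →ₗ[A] W)} (hT : ∀ i, VNBdd 𝕜 ‹_› ((fun ℓ => ℓ (e i)) '' T)) :
    VNBdd 𝕜 τT (dualBasisSection 𝕜 W d e '' T) := by
  refine (vnbdd_finsetSum hτT.1.1 Finset.univ fun i _ => hτT.2.1 _ ((hd i).prod (hT i))).subset ?_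
  rintro _ ⟨ℓ, hℓ, rfl⟩
  rw [dualBasisSection_apply]
  exact Set.finsetSum_mem_finsetSum _ _ _ fun i _ => ⟨(d i, ℓ (e i)), ⟨rfl, ℓ, hℓ, rfl⟩, rfl⟩

variable [TopologicalSpace A] [Module A D] [IsScalarTower 𝕜 A D]

theorem continuous_dualTensorHomOf_apply (hτT : IsBetaTensorTop 𝕜 tD ‹_› τT)
    (hW : IsLCTop 𝕜 W ‹_›)
    (hWmod : BddMap 𝕜 (inferInstance : TopologicalSpace (A × W)) ‹_› (fun p : A × W => p.1 • p.2))
    {eD : D →ₗ[A] P →ₗ[A] A} {q : P} (hq : BddMap 𝕜 tD ‹_› (fun d => eD d q)) :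
    @Continuous _ _ τT _ (fun x => dualTensorHomOf 𝕜 W eD x q) := by
  refine hτT.continuous_of_bddMap hW
    ((LinearMap.applyₗ q).restrictScalars 𝕜 ∘ₗ dualTensorHomOf 𝕜 W eD) fun s hs => ?_
  have hfst := hs.image_of_continuous (LinearMap.fst 𝕜 D W) (@continuous_fst D W tD _)
  have hsnd := hs.image_of_continuous (LinearMap.snd 𝕜 D W) (@continuous_snd D W tD _)
  refine (hWmod _ ((hq _ hfst).prod hsnd)).subset ?_
  rintro _ ⟨⟨x, w⟩, hxw, rfl⟩
  exact ⟨(eD x q, w), ⟨⟨x, ⟨(x, w), hxw, rfl⟩, rfl⟩, ⟨(x, w), hxw, rfl⟩⟩, rfl⟩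

theorem closure_balancedRelComm_subset_ker (hτT : IsBetaTensorTop 𝕜 tD ‹_› τT)
    (hW : IsLCTop 𝕜 W ‹_›) [T1Space W]
    (hWmod : BddMap 𝕜 (inferInstance : TopologicalSpace (A × W)) ‹_› (fun p : A × W => p.1 • p.2))
    {eD : D →ₗ[A] P →ₗ[A] A} (heval : ∀ q, BddMap 𝕜 tD ‹_› (fun d => eD d q)) :
    @closure _ τT (balancedRelComm 𝕜 A D W : Set (D ⊗[𝕜] W)) ⊆
      LinearMap.ker (dualTensorHomOf 𝕜 W eD) := by
  have hker : (LinearMap.ker (dualTensorHomOf 𝕜 W eD) : Set (D ⊗[𝕜] W)) =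
      ⋂ q, (fun x => dualTensorHomOf 𝕜 W eD x q) ⁻¹' {0} := by
    ext x
    simp [LinearMap.ext_iff]
  rw [hker]
  exact closure_minimal (hker ▸ balancedRelComm_le_ker_dualTensorHomOf eD)
    (isClosed_iInter fun q =>
      isClosed_singleton.preimage (continuous_dualTensorHomOf_apply hτT hW hWmod (heval q)))

end BetaTensor

theorem statement17_general {𝕜 : Type*} [RCLike 𝕜]
    -- A, a commutative bounded algebra
    (A : Type*) [CommRing A] [Algebra 𝕜 A] [TopologicalSpace A]
    -- W, a bounded A-module
    (W : Type*) [AddCommGroup W] [Module 𝕜 W] [Module A W] [IsScalarTower 𝕜 A W]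
    [TopologicalSpace W] [T2Space W] (hW : IsLCTop 𝕜 W (inferInstance))
    (hWmod : BddMap 𝕜 (inferInstance : TopologicalSpace (A × W)) (inferInstance)
      (fun p : A × W => p.1 • p.2))
    -- F, a free bounded A-module with a finite basis b whose dual basis is bounded
    (F : Type*) [AddCommGroup F] [Module 𝕜 F] [Module A F]
    [TopologicalSpace F]
    (nb : ℕ) (b : Module.Basis (Fin nb) A F)
    (hbdual : ∀ i, BddMap 𝕜 (inferInstance : TopologicalSpace F) (inferInstance)
      (fun x => b.coord i x))
    -- P, a bounded A-module which is a bounded direct summand of F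
    (P : Type*) [AddCommGroup P] [Module 𝕜 P] [Module A P]
    [TopologicalSpace P] (hP : IsLCTop 𝕜 P (inferInstance))
    (ι : P →ₗ[A] F) (πF : F →ₗ[A] P) (hπι : ∀ x, πF (ι x) = x)
    (hι : BddMap 𝕜 (inferInstance : TopologicalSpace P) (inferInstance) ⇑ι)
    -- D, a realization of L^b_A(P, A): an A-module identified via `eD` with the
    -- submodule of bounded maps in `P →ₗ[A] A`
    (D : Type*) [AddCommGroup D] [Module 𝕜 D] [Module A D] [IsScalarTower 𝕜 A D]
    (eD : D →ₗ[A] (P →ₗ[A] A)) (heD : Function.Injective ⇑eD)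
    (heDrange : ∀ u : P →ₗ[A] A,
      (∃ d, eD d = u) ↔ BddMap 𝕜 (inferInstance : TopologicalSpace P) (inferInstance) ⇑u)
    -- tD, a topology on D whose von Neumann bounded sets are the equibounded sets
    (tD : TopologicalSpace D)
    (htD : ∀ S : Set D, VNBdd 𝕜 tD S ↔
      ∀ B : Set P, VNBdd 𝕜 (inferInstance) B →
        VNBdd 𝕜 (inferInstance : TopologicalSpace A) (⋃ d ∈ S, ⇑(eD d) '' B))
    -- the bornological tensor product D ⊗_A^β W
    (τT : TopologicalSpace (TensorProduct 𝕜 D W))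
    (hτT : IsBetaTensorTop 𝕜 tD (inferInstance) τT)
    (J : Submodule 𝕜 (TensorProduct 𝕜 D W))
    (hJ : (J : Set (TensorProduct 𝕜 D W)) = @closure _ τT (balancedRelComm 𝕜 A D W)) :
    -- θ_P exists, is induced by (u*, w) ↦ [p ↦ u*(p) • w], and is a bornological
    -- isomorphism onto L^b_A(P, W)
    ∃ θ : (TensorProduct 𝕜 D W ⧸ J) →ₗ[𝕜] (P →ₗ[A] W),
      (∀ (d : D) (w : W) (q : P),
        θ (J.mkQ (d ⊗ₜ[𝕜] w)) q = eD d q • w) ∧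
      Function.Injective ⇑θ ∧
      (∀ ℓ : P →ₗ[A] W, (∃ x, θ x = ℓ) ↔
        BddMap 𝕜 (inferInstance : TopologicalSpace P) (inferInstance) ⇑ℓ) ∧
      -- θ is bounded
      (∀ S : Set (TensorProduct 𝕜 D W ⧸ J), VNBdd 𝕜 (τT.coinduced J.mkQ) S →
        ∀ B : Set P, VNBdd 𝕜 (inferInstance) B →
          VNBdd 𝕜 (inferInstance : TopologicalSpace W) (⋃ x ∈ S, ⇑(θ x) '' B)) ∧
      -- θ⁻¹ is bounded
      (∀ S : Set (TensorProduct 𝕜 D W ⧸ J),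
        (∀ B : Set P, VNBdd 𝕜 (inferInstance) B →
          VNBdd 𝕜 (inferInstance : TopologicalSpace W) (⋃ x ∈ S, ⇑(θ x) '' B)) →
        VNBdd 𝕜 (τT.coinduced J.mkQ) S) := by
  obtain ⟨d, hdφ, hde⟩ := b.exists_bdd_dualBasis_of_retract hbdual hπι hι
    fun u hu => (heDrange u).mpr hu
  set e := fun i => πF (b i)
  have heval : ∀ q, BddMap 𝕜 tD ‹_› (fun x => eD x q) := fun q S hS => by
    rw [Set.image_eq_iUnion]
    simpa using (htD S).mp hS {q} (vnbdd_singleton hP.1 q)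
  have hdbdd : ∀ i, VNBdd 𝕜 tD {d i} := fun i => (htD _).mpr fun B hB => by
    simpa using hdφ i B hB
  have hJ₀J : (balancedRelComm 𝕜 A D W : Set (D ⊗[𝕜] W)) ⊆ J := hJ ▸ @subset_closure _ τT _
  have hJker : J ≤ LinearMap.ker (dualTensorHomOf 𝕜 W eD) := fun x hx =>
    closure_balancedRelComm_subset_ker hτT hW hWmod heval (hJ ▸ hx)
  set θ := J.liftQ (dualTensorHomOf 𝕜 W eD) hJker
  have hθ_apply : ∀ q, @Continuous _ _ (τT.coinduced J.mkQ) _ (fun x => θ x q) := fun q =>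
    continuous_coinduced_dom.mpr (continuous_dualTensorHomOf_apply hτT hW hWmod (heval q))
  have hσθ : ∀ x, J.mkQ (dualBasisSection 𝕜 W d e (θ x)) = x := by
    rintro ⟨u⟩
    exact (Submodule.Quotient.eq J).mpr
      (sub_mem_comm_iff.mp (hJ₀J (sub_dualBasisSection_mem_balancedRelComm heD hde u)))
  refine ⟨θ, fun _ _ _ => rfl, ?_, fun ℓ => ⟨fun _ => ?_, fun _ => ?_⟩, ?_, ?_⟩
  · exact Function.LeftInverse.injective (g := J.mkQ ∘ dualBasisSection 𝕜 W d e) hσθ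
  · exact LinearMap.bddMap_of_dualBasis hW.1 hWmod hdφ hde ℓ
  · exact ⟨J.mkQ (dualBasisSection 𝕜 W d e ℓ), dualTensorHomOf_dualBasisSection hde ℓ⟩
  · intro S hS B hB
    refine vnbdd_biUnion_image_of_dualBasis hW.1 hWmod hdφ hde θ (fun i => ?_) hB
    exact hS.image_of_continuous ((LinearMap.applyₗ (e i)).restrictScalars 𝕜 ∘ₗ θ) (hθ_apply _)
  · intro S hS
    have hSe : ∀ i, VNBdd 𝕜 ‹_› ((fun ℓ => ℓ (e i)) '' (θ '' S)) := fun i =>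
      (hS {e i} (vnbdd_singleton hP.1 _)).subset <| by
        rintro _ ⟨_, ⟨x, hx, rfl⟩, rfl⟩
        exact Set.mem_biUnion hx ⟨e i, rfl, rfl⟩
    refine ((vnbdd_image_dualBasisSection hτT hdbdd e hSe).image_of_continuous J.mkQ
      continuous_coinduced_rng).subset fun x hx => ⟨_, ⟨θ x, ⟨x, hx, rfl⟩, rfl⟩, hσθ x⟩

theorem statement17 {𝕜 : Type*} [RCLike 𝕜]
    -- A, a commutative bounded algebra
    (A : Type*) [CommRing A] [Algebra 𝕜 A] [TopologicalSpace A] [T2Space A]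
    (hA : IsLCTop 𝕜 A (inferInstance))
    (hAmul : BddMap 𝕜 (inferInstance : TopologicalSpace (A × A)) (inferInstance)
      (fun p : A × A => p.1 * p.2))
    -- W, a bounded A-module
    (W : Type*) [AddCommGroup W] [Module 𝕜 W] [Module A W] [IsScalarTower 𝕜 A W]
    [TopologicalSpace W] [T2Space W] (hW : IsLCTop 𝕜 W (inferInstance))
    (hWmod : BddMap 𝕜 (inferInstance : TopologicalSpace (A × W)) (inferInstance)
      (fun p : A × W => p.1 • p.2))
    -- F, a free bounded A-module with a finite basis b whose dual basis is bounded
    (F : Type*) [AddCommGroup F] [Module 𝕜 F] [Module A F] [IsScalarTower 𝕜 A F]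
    [TopologicalSpace F] [T2Space F] (hF : IsLCTop 𝕜 F (inferInstance))
    (hFmod : BddMap 𝕜 (inferInstance : TopologicalSpace (A × F)) (inferInstance)
      (fun p : A × F => p.1 • p.2))
    (nb : ℕ) (b : Module.Basis (Fin nb) A F)
    (hbdual : ∀ i, BddMap 𝕜 (inferInstance : TopologicalSpace F) (inferInstance)
      (fun x => b.coord i x))
    -- P, a bounded A-module which is a bounded direct summand of F
    (P : Type*) [AddCommGroup P] [Module 𝕜 P] [Module A P] [IsScalarTower 𝕜 A P]
    [TopologicalSpace P] [T2Space P] (hP : IsLCTop 𝕜 P (inferInstance))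
    (hPmod : BddMap 𝕜 (inferInstance : TopologicalSpace (A × P)) (inferInstance)
      (fun p : A × P => p.1 • p.2))
    (ι : P →ₗ[A] F) (πF : F →ₗ[A] P) (hπι : ∀ x, πF (ι x) = x)
    (hι : BddMap 𝕜 (inferInstance : TopologicalSpace P) (inferInstance) ⇑ι)
    (hπ : BddMap 𝕜 (inferInstance : TopologicalSpace F) (inferInstance) ⇑πF)
    -- D, a realization of L^b_A(P, A): an A-module identified via `eD` with the
    -- submodule of bounded maps in `P →ₗ[A] A`
    (D : Type*) [AddCommGroup D] [Module 𝕜 D] [Module A D] [IsScalarTower 𝕜 A D]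
    (eD : D →ₗ[A] (P →ₗ[A] A)) (heD : Function.Injective ⇑eD)
    (heDrange : ∀ u : P →ₗ[A] A,
      (∃ d, eD d = u) ↔ BddMap 𝕜 (inferInstance : TopologicalSpace P) (inferInstance) ⇑u)
    -- tD, a topology on D whose von Neumann bounded sets are the equibounded sets
    (tD : TopologicalSpace D)
    (htD : ∀ S : Set D, VNBdd 𝕜 tD S ↔
      ∀ B : Set P, VNBdd 𝕜 (inferInstance) B →
        VNBdd 𝕜 (inferInstance : TopologicalSpace A) (⋃ d ∈ S, ⇑(eD d) '' B))
    -- the bornological tensor product D ⊗_A^β W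
    (τT : TopologicalSpace (TensorProduct 𝕜 D W))
    (hτT : IsBetaTensorTop 𝕜 tD (inferInstance) τT)
    (J : Submodule 𝕜 (TensorProduct 𝕜 D W))
    (hJ : (J : Set (TensorProduct 𝕜 D W)) = @closure _ τT (balancedRelComm 𝕜 A D W)) :
    -- θ_P exists, is induced by (u*, w) ↦ [p ↦ u*(p) • w], and is a bornological
    -- isomorphism onto L^b_A(P, W)
    ∃ θ : (TensorProduct 𝕜 D W ⧸ J) →ₗ[𝕜] (P →ₗ[A] W),
      (∀ (d : D) (w : W) (q : P),
        θ (J.mkQ (d ⊗ₜ[𝕜] w)) q = eD d q • w) ∧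
      Function.Injective ⇑θ ∧
      (∀ ℓ : P →ₗ[A] W, (∃ x, θ x = ℓ) ↔
        BddMap 𝕜 (inferInstance : TopologicalSpace P) (inferInstance) ⇑ℓ) ∧
      -- θ is bounded
      (∀ S : Set (TensorProduct 𝕜 D W ⧸ J), VNBdd 𝕜 (τT.coinduced J.mkQ) S →
        ∀ B : Set P, VNBdd 𝕜 (inferInstance) B →
          VNBdd 𝕜 (inferInstance : TopologicalSpace W) (⋃ x ∈ S, ⇑(θ x) '' B)) ∧
      -- θ⁻¹ is bounded
      (∀ S : Set (TensorProduct 𝕜 D W ⧸ J),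
        (∀ B : Set P, VNBdd 𝕜 (inferInstance) B →
          VNBdd 𝕜 (inferInstance : TopologicalSpace W) (⋃ x ∈ S, ⇑(θ x) '' B)) →
        VNBdd 𝕜 (τT.coinduced J.mkQ) S) :=
  statement17_general A W hW hWmod F nb b hbdual P hP ι πF hπι hι D eD heD heDrange tD htD τT hτT J
    hJ
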